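/- Let ρ(x) = 1/(2π(1−cos x)) and write ‖f‖_ρ = ( ∫_{−π}^{π} f² ρ dx )^{1/2}. Let u and ω be smooth, odd, 2π-periodic functions with u_x(0) = 0, let ψ be the odd 2π-periodic solution of −ψ_{xx} = ω, and set E = ( (1/2)(‖u_x‖_ρ² + ‖ω‖_ρ²) )^{1/2}. Then there is an absolute constant C > 0 (independent of u, ω) such that: (1) ‖ψ‖_ρ ≤ C E, ‖ψ_x − ψ_x(0)‖_ρ ≤ C E, ‖u‖_ρ ≤ C E; and (2) ‖ψ_x‖_{L^∞} ≤ C E, ‖ψ/ sin x‖_{L^∞} ≤ C E, ‖u‖_{L^∞} ≤ C E. -/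

import Mathlib

/-!
Since `1 / ρ = 2π (1 - cos x)`, Cauchy–Schwarz gives `(∫₀ˣ f)² ≤ 2π (x - sin x) ‖f‖_ρ²` on
`[0, π]`, and `x - sin x ≤ x (1 - cos x)` (i.e. `x cos x ≤ sin x`) turns this into
`(∫₀ˣ f)² ρ(x) ≤ x ‖f‖_ρ²`. Applied to `f = u_x` and to `f = -ω = (ψ_x - ψ_x(0))_x` this bounds
`u` and `ψ_x - ψ_x(0)` both pointwise and in `‖·‖_ρ`. As `ψ` vanishes at `0` and `π`, `ψ_x` has
mean zero on `[0, π]`, which controls `ψ_x(0)` and hence `ψ_x`; the mean value theorem then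
bounds `ψ` by `‖ψ_x‖_∞` times the distance to `{0, π}`, giving `‖ψ‖_ρ` and `‖ψ / sin x‖_∞`.
Parity and periodicity reduce every `L^∞` bound to `[0, π]`.
-/

open Real MeasureTheory

/-- The singular weight `ρ(x) = 1/(2π(1 − cos x))` on the circle. -/
noncomputable def rho (x : ℝ) : ℝ := 1 / (2 * π * (1 - Real.cos x))

/-- The weighted `L²(ρ)` norm `‖f‖_ρ = (∫_{−π}^{π} f² ρ)^{1/2}`. -/
noncomputable def wnorm (f : ℝ → ℝ) : ℝ :=
  Real.sqrt (∫ x in (-π)..π, (f x)^2 * rho x)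

open Set intervalIntegral

lemma measurable_rho : Measurable rho := by
  unfold rho; fun_prop

lemma rho_nonneg (x : ℝ) : 0 ≤ rho x :=
  one_div_nonneg.2 (mul_nonneg (by positivity) (sub_nonneg.2 (cos_le_one x)))

lemma one_sub_cos_pos {x : ℝ} (hx : |x| ≤ π) (hx0 : x ≠ 0) : 0 < 1 - cos x := by
  have := cos_le_one_sub_mul_cos_sq hx
  have : 0 < 2 / π ^ 2 * x ^ 2 := by positivity
  linarith

lemma rho_le_div_sq {x : ℝ} (hx : |x| ≤ π) (hx0 : x ≠ 0) : rho x ≤ π / (4 * x ^ 2) := by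
  have hpos : 0 < 4 * x ^ 2 / π := by positivity
  have hle : 4 * x ^ 2 / π ≤ 2 * π * (1 - cos x) := by
    have := cos_le_one_sub_mul_cos_sq hx
    rw [div_le_iff₀ pi_pos]
    have : 2 / π ^ 2 * x ^ 2 * π ^ 2 = 2 * x ^ 2 := by field_simp
    nlinarith [pi_pos]
  calc rho x ≤ 1 / (4 * x ^ 2 / π) := one_div_le_one_div_of_le hpos hle
    _ = π / (4 * x ^ 2) := one_div_div _ _

lemma sq_mul_rho_le {y t L : ℝ} (ht : |t| ≤ π) (hy : |y| ≤ L * |t|) :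
    y ^ 2 * rho t ≤ π * L ^ 2 / 4 := by
  rcases eq_or_ne t 0 with rfl | ht0
  · simp [rho]; positivity
  have hy2 : y ^ 2 ≤ L ^ 2 * t ^ 2 := by
    simpa [mul_pow] using pow_le_pow_left₀ (abs_nonneg y) hy 2
  calc y ^ 2 * rho t ≤ L ^ 2 * t ^ 2 * (π / (4 * t ^ 2)) :=
        mul_le_mul hy2 (rho_le_div_sq ht ht0) (rho_nonneg t) (by positivity)
    _ = π * L ^ 2 / 4 := by field_simp

lemma mul_cos_le_sin {x : ℝ} (hx : x ∈ Icc 0 π) : x * cos x ≤ sin x := by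
  obtain ⟨hx0, hxπ⟩ := hx
  rcases lt_or_ge x (π / 2) with hlt | hge
  · rcases hx0.eq_or_lt with rfl | hpos
    · simp
    have hcos : 0 < cos x := cos_pos_of_mem_Ioo ⟨by linarith [pi_pos], hlt⟩
    have := lt_tan hpos hlt
    rw [tan_eq_sin_div_cos, lt_div_iff₀ hcos] at this
    exact this.le
  · have : cos x ≤ 0 := cos_nonpos_of_pi_div_two_le_of_le hge (by linarith [pi_pos])
    nlinarith [sin_nonneg_of_nonneg_of_le_pi hx0 hxπ]

lemma two_pi_mul_sub_sin_mul_rho_le {x : ℝ} (hx : x ∈ Icc 0 π) :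
    2 * π * (x - sin x) * rho x ≤ x := by
  rcases hx.1.eq_or_lt with rfl | hpos
  · simp
  have hw : 0 < 2 * π * (1 - cos x) :=
    mul_pos two_pi_pos (one_sub_cos_pos (abs_le.2 ⟨by linarith [pi_pos], hx.2⟩) hpos.ne')
  rw [rho, ← div_eq_mul_one_div, div_le_iff₀ hw]
  nlinarith [mul_cos_le_sin hx, pi_pos]

lemma sq_wnorm (f : ℝ → ℝ) : wnorm f ^ 2 = ∫ t in (-π)..π, f t ^ 2 * rho t :=
  sq_sqrt <| integral_nonneg (by linarith [pi_pos]) fun t _ =>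
    mul_nonneg (sq_nonneg _) (rho_nonneg t)

lemma sq_wnorm_le {f : ℝ → ℝ} {B : ℝ} (heven : ∀ t, f (-t) ^ 2 = f t ^ 2)
    (hB : ∀ t ∈ Icc 0 π, f t ^ 2 * rho t ≤ B) : wnorm f ^ 2 ≤ 2 * π * B := by
  have hB' : ∀ t ∈ uIoc (-π) π, ‖f t ^ 2 * rho t‖ ≤ B := by
    intro t ht
    rw [uIoc_of_le (by linarith [pi_pos])] at ht
    rw [Real.norm_of_nonneg (mul_nonneg (sq_nonneg _) (rho_nonneg t))]
    rcases le_total 0 t with h | h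
    · exact hB t ⟨h, ht.2⟩
    · have := hB (-t) ⟨neg_nonneg.2 h, by linarith [ht.1]⟩
      rwa [heven, rho, cos_neg, ← rho] at this
  rw [sq_wnorm]
  refine (le_abs_self _).trans ?_
  have := norm_integral_le_of_norm_le_const hB'
  rwa [Real.norm_eq_abs, sub_neg_eq_add, ← two_mul, abs_of_pos two_pi_pos, mul_comm] at this

lemma exists_abs_le_mul_abs_of_contDiff {f : ℝ → ℝ} (hf : ContDiff ℝ 1 f) (h0 : f 0 = 0) :
    ∃ L : ℝ, ∀ t ∈ Icc (-π) π, |f t| ≤ L * |t| := by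
  obtain ⟨K, hK⟩ := hf.locallyLipschitz.locallyLipschitzOn.exists_lipschitzOnWith_of_compact
    (isCompact_Icc (a := -π) (b := π))
  have h0mem : (0 : ℝ) ∈ Icc (-π) π := ⟨by linarith [pi_pos], pi_pos.le⟩
  refine ⟨K, fun t ht => ?_⟩
  simpa [h0, Real.dist_eq] using hK.dist_le_mul t ht 0 h0mem

lemma integrableOn_sq_mul_rho {f : ℝ → ℝ} (hf : ContDiff ℝ 1 f) (h0 : f 0 = 0) :
    IntegrableOn (fun t => f t ^ 2 * rho t) (Ioc (-π) π) := by
  obtain ⟨L, hL⟩ := exists_abs_le_mul_abs_of_contDiff hf h0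
  refine Measure.integrableOn_of_bounded (M := π * L ^ 2 / 4) measure_Ioc_lt_top.ne
    ((hf.continuous.measurable.pow_const 2).mul measurable_rho).aestronglyMeasurable ?_
  rw [ae_restrict_iff' measurableSet_Ioc]
  refine ae_of_all _ fun t ht => ?_
  have ht' : t ∈ Icc (-π) π := Ioc_subset_Icc_self ht
  rw [Real.norm_of_nonneg (mul_nonneg (sq_nonneg _) (rho_nonneg t))]
  exact sq_mul_rho_le (abs_le.2 ht') (hL t ht')

lemma sq_integral_mul_le {α : Type*} [MeasurableSpace α] {μ : Measure α} {f g : α → ℝ}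
    (hf : MemLp f 2 μ) (hg : MemLp g 2 μ) :
    (∫ a, f a * g a ∂μ) ^ 2 ≤ (∫ a, f a ^ 2 ∂μ) * ∫ a, g a ^ 2 ∂μ := by
  have hholder := integral_mul_norm_le_Lp_mul_Lq Real.HolderConjugate.two_two
    (by simpa using hf) (by simpa using hg)
  simp only [Real.norm_eq_abs, Real.rpow_two, sq_abs] at hholder
  have habs : |∫ a, f a * g a ∂μ| ≤ ∫ a, |f a| * |g a| ∂μ := by
    simpa [abs_mul] using abs_integral_le_integral_abs (f := fun a => f a * g a)
  have hA : 0 ≤ ∫ a, f a ^ 2 ∂μ := integral_nonneg fun a => sq_nonneg _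
  have hB : 0 ≤ ∫ a, g a ^ 2 ∂μ := integral_nonneg fun a => sq_nonneg _
  rw [← sqrt_eq_rpow, ← sqrt_eq_rpow] at hholder
  rw [← sq_abs]
  calc |∫ a, f a * g a ∂μ| ^ 2 ≤ (√(∫ a, f a ^ 2 ∂μ) * √(∫ a, g a ^ 2 ∂μ)) ^ 2 :=
        pow_le_pow_left₀ (abs_nonneg _) (habs.trans hholder) 2
    _ = _ := by rw [mul_pow, sq_sqrt hA, sq_sqrt hB]

lemma sq_integral_le_mul_sq_wnorm {f : ℝ → ℝ} (hf : Continuous f)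
    (hI : IntegrableOn (fun t => f t ^ 2 * rho t) (Ioc (-π) π)) {x : ℝ} (hx : x ∈ Icc 0 π) :
    (∫ t in 0..x, f t) ^ 2 ≤ 2 * π * (x - sin x) * wnorm f ^ 2 := by
  set w : ℝ → ℝ := fun t => 2 * π * (1 - cos t)
  have hw : ∀ t, 0 ≤ w t := fun t => mul_nonneg two_pi_pos.le (sub_nonneg.2 (cos_le_one t))
  have hsub : Ioc 0 x ⊆ Ioc (-π) π := Ioc_subset_Ioc (by linarith [pi_pos]) hx.2
  have hfactor : EqOn f (fun t => f t * √(rho t) * √(w t)) (Ioc 0 x) := by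
    intro t ht
    have hwt : w t ≠ 0 := (mul_pos two_pi_pos (one_sub_cos_pos
      (abs_le.2 ⟨by linarith [pi_pos, ht.1], ht.2.trans hx.2⟩) ht.1.ne')).ne'
    simp only
    rw [mul_assoc, ← sqrt_mul (rho_nonneg t), rho, one_div_mul_cancel hwt, sqrt_one, mul_one]
  have hfρ : MemLp (fun t => f t * √(rho t)) 2 (volume.restrict (Ioc 0 x)) := by
    refine (memLp_two_iff_integrable_sq (f := fun t => f t * √(rho t))
      (hf.measurable.mul measurable_rho.sqrt).aestronglyMeasurable).2 ?_
    simp only [mul_pow, sq_sqrt (rho_nonneg _)]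
    exact hI.mono_set hsub
  have hwL : MemLp (fun t => √(w t)) 2 (volume.restrict (Ioc 0 x)) := by
    refine (memLp_two_iff_integrable_sq (by fun_prop)).2 ?_
    have hsq : (fun t => √(w t) ^ 2) = w := funext fun t => sq_sqrt (hw t)
    rw [hsq]
    exact (by fun_prop : Continuous w).integrableOn_Ioc
  have hρmono : ∫ t in Ioc 0 x, f t ^ 2 * rho t ≤ wnorm f ^ 2 := by
    rw [sq_wnorm, integral_of_le (by linarith [pi_pos])]
    exact setIntegral_mono_set hI (ae_of_all _ fun t => mul_nonneg (sq_nonneg _) (rho_nonneg t))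
      hsub.eventuallyLE
  have hwint : ∫ t in Ioc 0 x, w t = 2 * π * (x - sin x) := by
    rw [← integral_of_le hx.1]; simp [w]
  calc (∫ t in 0..x, f t) ^ 2 = (∫ t in Ioc 0 x, f t * √(rho t) * √(w t)) ^ 2 := by
        rw [integral_of_le hx.1, setIntegral_congr_fun measurableSet_Ioc hfactor]
    _ ≤ (∫ t in Ioc 0 x, (f t * √(rho t)) ^ 2) * ∫ t in Ioc 0 x, √(w t) ^ 2 :=
        sq_integral_mul_le hfρ hwL
    _ = (∫ t in Ioc 0 x, f t ^ 2 * rho t) * (2 * π * (x - sin x)) := by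
        simp only [mul_pow, sq_sqrt (rho_nonneg _), sq_sqrt (hw _), hwint]
    _ ≤ 2 * π * (x - sin x) * wnorm f ^ 2 := by
        rw [mul_comm]
        exact mul_le_mul_of_nonneg_left hρmono
          (mul_nonneg two_pi_pos.le (sub_nonneg.2 (sin_le hx.1)))

section Primitive

variable {F : ℝ → ℝ} {E : ℝ}

lemma sq_le_mul_sq_wnorm_deriv (hF : ContDiff ℝ 2 F) (hF0 : F 0 = 0)
    (hF'0 : deriv F 0 = 0) {x : ℝ} (hx : x ∈ Icc 0 π) :
    F x ^ 2 ≤ 2 * π * (x - sin x) * wnorm (deriv F) ^ 2 := by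
  have hF' : ContDiff ℝ 1 (deriv F) := hF.deriv'
  have hFTC : ∫ t in 0..x, deriv F t = F x := by
    rw [integral_deriv_eq_sub (fun t _ => (hF.differentiable two_ne_zero).differentiableAt)
      (hF'.continuous.intervalIntegrable 0 x), hF0, sub_zero]
  rw [← hFTC]
  exact sq_integral_le_mul_sq_wnorm hF'.continuous (integrableOn_sq_mul_rho hF' hF'0) hx

lemma abs_le_of_sq_wnorm_deriv_le (hF : ContDiff ℝ 2 F) (hF0 : F 0 = 0) (hF'0 : deriv F 0 = 0)
    (hE : wnorm (deriv F) ^ 2 ≤ 2 * E ^ 2) (hE0 : 0 ≤ E) {x : ℝ} (hx : x ∈ Icc 0 π) :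
    |F x| ≤ 2 * π * E := by
  refine abs_le_of_sq_le_sq ?_ (by positivity)
  have hsin : 0 ≤ x - sin x := sub_nonneg.2 (sin_le hx.1)
  have hsin' : x - sin x ≤ π := by linarith [sin_nonneg_of_nonneg_of_le_pi hx.1 hx.2, hx.2]
  calc F x ^ 2 ≤ 2 * π * (x - sin x) * wnorm (deriv F) ^ 2 :=
        sq_le_mul_sq_wnorm_deriv hF hF0 hF'0 hx
    _ ≤ 2 * π * π * (2 * E ^ 2) := by gcongr
    _ = (2 * π * E) ^ 2 := by ring

lemma wnorm_le_of_sq_wnorm_deriv_le (hF : ContDiff ℝ 2 F) (hF0 : F 0 = 0)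
    (hF'0 : deriv F 0 = 0) (heven : ∀ t, F (-t) ^ 2 = F t ^ 2)
    (hE : wnorm (deriv F) ^ 2 ≤ 2 * E ^ 2) (hE0 : 0 ≤ E) : wnorm F ≤ 2 * π * E := by
  refine (sq_le_sq₀ (sqrt_nonneg _) (by positivity)).1 ?_
  have hpt : ∀ x ∈ Icc 0 π, F x ^ 2 * rho x ≤ π * (2 * E ^ 2) := fun x hx =>
    calc F x ^ 2 * rho x ≤ 2 * π * (x - sin x) * wnorm (deriv F) ^ 2 * rho x :=
          mul_le_mul_of_nonneg_right (sq_le_mul_sq_wnorm_deriv hF hF0 hF'0 hx) (rho_nonneg x)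
      _ = 2 * π * (x - sin x) * rho x * wnorm (deriv F) ^ 2 := by ring
      _ ≤ π * (2 * E ^ 2) :=
          mul_le_mul ((two_pi_mul_sub_sin_mul_rho_le hx).trans hx.2) hE (sq_nonneg _) pi_pos.le
  calc wnorm F ^ 2 ≤ 2 * π * (π * (2 * E ^ 2)) := sq_wnorm_le heven hpt
    _ = (2 * π * E) ^ 2 := by ring

end Primitive

lemma Function.Odd.deriv_even {f : ℝ → ℝ} (hf : f.Odd) : (deriv f).Even := fun x => by
  have h := deriv_comp_neg (f := f) (x := x)
  rw [show (fun y => f (-y)) = fun y => -f y from funext hf, deriv.fun_neg] at h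
  linarith

lemma Function.Periodic.deriv_periodic {f : ℝ → ℝ} {c : ℝ} (hf : f.Periodic c) :
    (deriv f).Periodic c := fun x => by
  rw [← deriv_comp_add_const, show (fun y => f (y + c)) = f from funext hf]

lemma Function.Odd.map_half_period_eq_zero {f : ℝ → ℝ} {c : ℝ} (hf : f.Odd) (hp : f.Periodic c) :
    f (c / 2) = 0 := by
  have h := hp (-(c / 2))
  rw [show -(c / 2) + c = c / 2 by ring, hf] at h
  linarith

lemma forall_le_of_even_of_periodic {f : ℝ → ℝ} {B : ℝ} (he : f.Even) (hp : f.Periodic (2 * π))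
    (hB : ∀ y ∈ Icc 0 π, f y ≤ B) (x : ℝ) : f x ≤ B := by
  obtain ⟨y, hy, hxy⟩ := hp.exists_mem_Ico two_pi_pos x (-π)
  rw [hxy]
  rcases le_total 0 y with h | h
  · exact hB y ⟨h, by linarith [hy.2]⟩
  · rw [← he]; exact hB (-y) ⟨by linarith, by linarith [hy.1]⟩

lemma abs_le_of_integral_eq_zero {h : ℝ → ℝ} {a b c M : ℝ} (hab : a < b)
    (hh : IntervalIntegrable h volume a b) (h0 : ∫ t in a..b, h t = 0)
    (hM : ∀ t ∈ Icc a b, |h t - c| ≤ M) : |c| ≤ M := by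
  have hint : ∫ t in a..b, (h t - c) = -((b - a) * c) := by
    rw [integral_sub hh intervalIntegrable_const, h0, intervalIntegral.integral_const,
      smul_eq_mul]
    ring
  have hbound := norm_integral_le_of_norm_le_const (a := a) (b := b) (f := fun t => h t - c)
    fun t ht => hM t (Ioc_subset_Icc_self (by rwa [uIoc_of_le hab.le] at ht))
  rw [hint, norm_neg, Real.norm_eq_abs, abs_mul, abs_of_pos (sub_pos.2 hab), mul_comm M]
    at hbound
  exact le_of_mul_le_mul_left hbound (sub_pos.2 hab)

lemma abs_sub_le_of_abs_deriv_le {f : ℝ → ℝ} {M : ℝ} (hf : Differentiable ℝ f)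
    (hM : ∀ x, |deriv f x| ≤ M) (x y : ℝ) : |f x - f y| ≤ M * |x - y| :=
  convex_univ.norm_image_sub_le_of_norm_deriv_le (fun z _ => hf z) (fun z _ => hM z)
    (mem_univ y) (mem_univ x)

lemma abs_div_sin_le {x y M : ℝ} (hx : x ∈ Icc 0 π) (hM : 0 ≤ M) (h₁ : |y| ≤ M * x)
    (h₂ : |y| ≤ M * (π - x)) : |y / sin x| ≤ π / 2 * M := by
  have hsin0 := sin_nonneg_of_nonneg_of_le_pi hx.1 hx.2
  rcases hsin0.eq_or_lt with h | hsin
  · rw [← h, div_zero, abs_zero]; positivity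
  rw [abs_div, abs_of_pos hsin, div_le_iff₀ hsin]
  rcases le_total x (π / 2) with h | h
  · have := mul_le_sin hx.1 h
    calc |y| ≤ M * x := h₁
      _ = π / 2 * M * (2 / π * x) := by field_simp
      _ ≤ π / 2 * M * sin x := by gcongr
  · have := mul_le_sin (x := π - x) (by linarith [hx.2]) (by linarith)
    rw [sin_pi_sub] at this
    calc |y| ≤ M * (π - x) := h₂
      _ = π / 2 * M * (2 / π * (π - x)) := by field_simp
      _ ≤ π / 2 * M * sin x := by gcongr

section OddPeriodic

variable {ψ : ℝ → ℝ} {M : ℝ}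

lemma map_pi_eq_zero (hodd : ψ.Odd) (hper : ψ.Periodic (2 * π)) : ψ π = 0 := by
  simpa using hodd.map_half_period_eq_zero hper

lemma abs_deriv_le_of_abs_deriv_sub_le (hψ : ContDiff ℝ 1 ψ) (hodd : ψ.Odd)
    (hper : ψ.Periodic (2 * π)) (hM : ∀ x ∈ Icc 0 π, |deriv ψ x - deriv ψ 0| ≤ M) (x : ℝ) :
    |deriv ψ x| ≤ 2 * M := by
  have hmean : ∫ t in 0..π, deriv ψ t = 0 := by
    rw [integral_deriv_eq_sub (fun t _ => (hψ.differentiable one_ne_zero).differentiableAt)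
      ((hψ.continuous_deriv le_rfl).intervalIntegrable 0 π), map_pi_eq_zero hodd hper,
      hodd.map_zero, sub_zero]
  have h0 : |deriv ψ 0| ≤ M := abs_le_of_integral_eq_zero pi_pos
    ((hψ.continuous_deriv le_rfl).intervalIntegrable 0 π) hmean hM
  refine forall_le_of_even_of_periodic (f := fun x => |deriv ψ x|)
    (fun x => by simp only [hodd.deriv_even x]) (fun x => by simp only [hper.deriv_periodic x])
    (fun y hy => ?_) x
  calc |deriv ψ y| = |(deriv ψ y - deriv ψ 0) + deriv ψ 0| := by rw [sub_add_cancel]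
    _ ≤ |deriv ψ y - deriv ψ 0| + |deriv ψ 0| := abs_add_le _ _
    _ ≤ 2 * M := by linarith [hM y hy]

lemma abs_div_sin_le_of_abs_deriv_le (hψ : Differentiable ℝ ψ) (hodd : ψ.Odd)
    (hper : ψ.Periodic (2 * π)) (hM : ∀ x, |deriv ψ x| ≤ M) (x : ℝ) :
    |ψ x / sin x| ≤ π / 2 * M := by
  refine forall_le_of_even_of_periodic (f := fun x => |ψ x / sin x|)
    (fun x => by simp only [hodd x, sin_neg, neg_div_neg_eq])
    (fun x => by simp only [hper x, sin_add_two_pi]) (fun y hy => ?_) x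
  have hmvt := abs_sub_le_of_abs_deriv_le hψ hM y
  refine abs_div_sin_le hy ((abs_nonneg _).trans (hM 0)) ?_ ?_
  · simpa [hodd.map_zero, abs_of_nonneg hy.1] using hmvt 0
  · simpa [map_pi_eq_zero hodd hper, abs_of_nonpos (sub_nonpos.2 hy.2)] using hmvt π

lemma wnorm_le_of_abs_deriv_le (hψ : Differentiable ℝ ψ) (hodd : ψ.Odd)
    (hM : ∀ x, |deriv ψ x| ≤ M) : wnorm ψ ≤ π * M := by
  have hM0 : 0 ≤ M := (abs_nonneg _).trans (hM 0)
  refine (sq_le_sq₀ (sqrt_nonneg _) (by positivity)).1 ?_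
  have hpt : ∀ t ∈ Icc 0 π, ψ t ^ 2 * rho t ≤ π * M ^ 2 / 4 := fun t ht =>
    sq_mul_rho_le (abs_le.2 ⟨by linarith [ht.1, pi_pos], ht.2⟩)
      (by simpa [hodd.map_zero] using abs_sub_le_of_abs_deriv_le hψ hM t 0)
  calc wnorm ψ ^ 2 ≤ 2 * π * (π * M ^ 2 / 4) := sq_wnorm_le (fun t => by rw [hodd, neg_sq]) hpt
    _ ≤ (π * M) ^ 2 := by nlinarith [pi_pos, sq_nonneg M]

lemma abs_deriv_le_and_wnorm_deriv_sub_le {ω : ℝ → ℝ} {E : ℝ} (hψ : ContDiff ℝ 3 ψ)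
    (hodd : ψ.Odd) (hper : ψ.Periodic (2 * π)) (hψω : ∀ x, -deriv (deriv ψ) x = ω x)
    (hω0 : ω 0 = 0) (hE : wnorm ω ^ 2 ≤ 2 * E ^ 2) (hE0 : 0 ≤ E) :
    (∀ x, |deriv ψ x| ≤ 4 * π * E) ∧ wnorm (fun x => deriv ψ x - deriv ψ 0) ≤ 2 * π * E := by
  set g : ℝ → ℝ := fun x => deriv ψ x - deriv ψ 0
  have hg : ContDiff ℝ 2 g := (hψ.deriv' (n := 2)).sub contDiff_const
  have hg' : deriv g = fun x => -ω x := funext fun x => by simp [g, ← hψω x]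
  have hg'0 : deriv g 0 = 0 := by simp [hg', hω0]
  have hgE : wnorm (deriv g) ^ 2 ≤ 2 * E ^ 2 := by simpa only [hg', wnorm, neg_sq] using hE
  refine ⟨fun x => ?_, wnorm_le_of_sq_wnorm_deriv_le hg (sub_self _) hg'0
    (fun t => by simp [g, hodd.deriv_even t]) hgE hE0⟩
  refine (abs_deriv_le_of_abs_deriv_sub_le (hψ.of_le (by norm_num)) hodd hper
    (fun y hy => abs_le_of_sq_wnorm_deriv_le hg (sub_self _) hg'0 hgE hE0 hy) x).trans_eq ?_
  ring

end OddPeriodic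

/-- Lower-order weighted `L²` and `L^∞` estimates: there is an absolute constant
`C > 0` such that for all smooth odd `2π`-periodic `u, ω` with `u_x(0) = 0` and `ψ`
the odd `2π`-periodic stream function solving `−ψ'' = ω`, setting
`E = ((1/2)(‖u_x‖_ρ² + ‖ω‖_ρ²))^{1/2}`, one has
`‖ψ‖_ρ, ‖ψ_x − ψ_x(0)‖_ρ, ‖u‖_ρ ≤ CE` and
`‖ψ_x‖_∞, ‖ψ/sin x‖_∞, ‖u‖_∞ ≤ CE`. -/
theorem stmt8 : ∃ C : ℝ, 0 < C ∧
    ∀ u ω ψ : ℝ → ℝ,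
      ContDiff ℝ (⊤:ℕ∞) u → ContDiff ℝ (⊤:ℕ∞) ω → ContDiff ℝ (⊤:ℕ∞) ψ →
      (∀ x, u (-x) = -(u x)) → (∀ x, ω (-x) = -(ω x)) → (∀ x, ψ (-x) = -(ψ x)) →
      (∀ x, u (x + 2*π) = u x) → (∀ x, ω (x + 2*π) = ω x) → (∀ x, ψ (x + 2*π) = ψ x) →
      deriv u 0 = 0 →
      (∀ x, -(deriv (deriv ψ) x) = ω x) →
      ∀ E : ℝ,
        E = Real.sqrt ((1/2) * ((∫ x in (-π)..π, (deriv u x)^2 * rho x)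
              + (∫ x in (-π)..π, (ω x)^2 * rho x))) →
        wnorm ψ ≤ C * E ∧
        wnorm (fun x => deriv ψ x - deriv ψ 0) ≤ C * E ∧
        wnorm u ≤ C * E ∧
        (∀ x, |deriv ψ x| ≤ C * E) ∧
        (∀ x, |ψ x / Real.sin x| ≤ C * E) ∧
        (∀ x, |u x| ≤ C * E) := by
  refine ⟨4 * π ^ 2, by positivity, ?_⟩
  intro u ω ψ hu _ hψ huodd hωodd hψodd huper _ hψper hu'0 hψω E hE
  have hE0 : 0 ≤ E := hE ▸ sqrt_nonneg _
  have hE2 : wnorm (deriv u) ^ 2 + wnorm ω ^ 2 = 2 * E ^ 2 := by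
    rw [hE, ← sq_wnorm, ← sq_wnorm, sq_sqrt (by positivity)]; ring
  have huE : wnorm (deriv u) ^ 2 ≤ 2 * E ^ 2 := by linarith [sq_nonneg (wnorm ω)]
  have hωE : wnorm ω ^ 2 ≤ 2 * E ^ 2 := by linarith [sq_nonneg (wnorm (deriv u))]
  have hu2 : ContDiff ℝ 2 u := hu.of_le (WithTop.coe_le_coe.2 le_top)
  have hu0 : u 0 = 0 := Function.Odd.map_zero huodd
  have hψ3 : ContDiff ℝ 3 ψ := hψ.of_le (WithTop.coe_le_coe.2 le_top)
  have hψd : Differentiable ℝ ψ := hψ3.differentiable (by norm_num)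
  obtain ⟨hψ', hg⟩ := abs_deriv_le_and_wnorm_deriv_sub_le hψ3 hψodd hψper hψω
    (Function.Odd.map_zero hωodd) hωE hE0
  have hC : ∀ c, c ≤ 4 * π ^ 2 → c * E ≤ 4 * π ^ 2 * E := fun c hc =>
    mul_le_mul_of_nonneg_right hc hE0
  have hπ := pi_gt_three
  refine ⟨(wnorm_le_of_abs_deriv_le hψd hψodd hψ').trans_eq (by ring),
    hg.trans (hC _ (by nlinarith)), ?_, fun x => (hψ' x).trans (hC _ (by nlinarith)),
    fun x => ?_, fun x => ?_⟩
  · exact (wnorm_le_of_sq_wnorm_deriv_le hu2 hu0 hu'0 (fun t => by rw [huodd, neg_sq]) huE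
      hE0).trans (hC _ (by nlinarith))
  · exact ((abs_div_sin_le_of_abs_deriv_le hψd hψodd hψper hψ' x).trans_eq
      (by ring : π / 2 * (4 * π * E) = 2 * π ^ 2 * E)).trans (hC _ (by nlinarith))
  · refine forall_le_of_even_of_periodic (f := fun x => |u x|) (fun x => by simp [huodd x])
      (fun x => by simp [huper x]) (fun y hy => ?_) x
    exact (abs_le_of_sq_wnorm_deriv_le hu2 hu0 hu'0 huE hE0 hy).trans (hC _ (by nlinarith))
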